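/- Converse chain inequality at the relay: for any (m,n) source-channel code for the DM MABRC, with all random variables distributed according to the joint law induced by the source, the encoders, the causal relay function and the memoryless channel, the following holds: ∑_{i=1}^{n} I(X_{1,i}; Y_{3,i} | X_{2,i}, X_{3,i}) ≥ I(S1^m, W^m; Y3^n | S2^m, W3^m) ≥ H(S1^m | S2^m, W3^m) − H(S1^m | Y3^n, S2^m, W3^m). -/

import Mathlib

/-!
The relay term `I(S₁ᵐ, Wᵐ; Y₃ⁿ | S₂ᵐ, W₃ᵐ)` telescopes over the relay outputs into
`∑ᵢ I(S₁ᵐ, Wᵐ; Y₃ᵢ | Y₃^{i-1}, S₂ᵐ, W₃ᵐ)`. In the `i`-th term, `H(Y₃ᵢ | Y₃^{i-1}, S₂ᵐ, W₃ᵐ)` can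
only grow when the conditioning is coarsened to `(X₂ᵢ, X₃ᵢ)`, which is a function of it, while
`H(Y₃ᵢ | S₁ᵐ, Wᵐ, Y₃^{i-1}, S₂ᵐ, W₃ᵐ) = H(Y₃ᵢ | X₁ᵢ, X₂ᵢ, X₃ᵢ)`: the channel is memoryless and the
relay encoder causal, so given the sources and the past relay outputs, `Y₃ᵢ` is drawn from the
relay marginal of the channel at the current inputs. The second inequality drops `Wᵐ` from the
mutual information.
-/

open scoped BigOperators
open Finset

noncomputable section
open scoped Classical

namespace Paper

def pr {Ω A : Type*} [Fintype Ω] (μ : Ω → ℝ) (X : Ω → A) (a : A) : ℝ :=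
  ∑ ω, if X ω = a then μ ω else 0

def Hent {Ω A : Type*} [Fintype Ω] [Fintype A] (μ : Ω → ℝ) (X : Ω → A) : ℝ :=
  - ∑ a, pr μ X a * Real.logb 2 (pr μ X a)

def condEnt {Ω A B : Type*} [Fintype Ω] [Fintype A] [Fintype B]
    (μ : Ω → ℝ) (X : Ω → A) (Y : Ω → B) : ℝ :=
  Hent μ (fun ω => (X ω, Y ω)) - Hent μ Y

def mutInfo {Ω A B : Type*} [Fintype Ω] [Fintype A] [Fintype B]
    (μ : Ω → ℝ) (X : Ω → A) (Y : Ω → B) : ℝ :=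
  Hent μ X + Hent μ Y - Hent μ (fun ω => (X ω, Y ω))

def condMutInfo {Ω A B C : Type*} [Fintype Ω] [Fintype A] [Fintype B] [Fintype C]
    (μ : Ω → ℝ) (X : Ω → A) (Y : Ω → B) (Z : Ω → C) : ℝ :=
  condEnt μ X Z - condEnt μ X (fun ω => (Y ω, Z ω))

structure SourcePMF (S : Type) [Fintype S] where
  q : S → ℝ
  nonneg : ∀ s, 0 ≤ q s
  sum_one : ∑ s, q s = 1

/-- A discrete memoryless multiple-access (broadcast) relay channel. -/
structure DMMARC (X1 X2 X3 Y Y3 : Type) [Fintype X1] [Fintype X2] [Fintype X3]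
    [Fintype Y] [Fintype Y3] where
  P : X1 → X2 → X3 → Y → Y3 → ℝ
  nonneg : ∀ x1 x2 x3 y y3, 0 ≤ P x1 x2 x3 y y3
  sum_one : ∀ x1 x2 x3, ∑ y : Y, ∑ y3 : Y3, P x1 x2 x3 y y3 = 1

/-- An (m,n) source-channel code for the MABRC: two encoders, a causal relay
encoding function, a destination decoder and a relay decoder. -/
structure MABRCCode (S1 S2 W W3 X1 X2 X3 Y Y3 : Type) (m n : ℕ) where
  f1 : (Fin m → S1) → Fin n → X1
  f2 : (Fin m → S2) → Fin n → X2
  f3 : (k : Fin n) → (Fin k.val → Y3) → (Fin m → W3) → X3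
  g : (Fin n → Y) → (Fin m → W) → (Fin m → S1) × (Fin m → S2)
  g3 : (Fin n → Y3) → (Fin m → W3) → (Fin m → S1) × (Fin m → S2)

variable {S1 S2 W W3 X1 X2 X3 Y Y3 : Type} {m n : ℕ}

/-- The relay channel input at time `k` (causal function of past relay outputs and `W3^m`). -/
def relayIn (c : MABRCCode S1 S2 W W3 X1 X2 X3 Y Y3 m n)
    (y3 : Fin n → Y3) (w3 : Fin m → W3) (k : Fin n) : X3 :=
  c.f3 k (fun j => y3 ⟨j.val, j.isLt.trans k.isLt⟩) w3

section
variable [Fintype S1] [Fintype S2] [Fintype W] [Fintype W3]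
  [Fintype X1] [Fintype X2] [Fintype X3] [Fintype Y] [Fintype Y3]

/-- Joint law on (source sequences, destination outputs, relay outputs)
induced by the i.i.d. source, the encoders, the causal relay function and the
memoryless channel. -/
def mabrcLaw (src : SourcePMF (S1 × S2 × W × W3)) (ch : DMMARC X1 X2 X3 Y Y3)
    (c : MABRCCode S1 S2 W W3 X1 X2 X3 Y Y3 m n) :
    ((Fin m → S1 × S2 × W × W3) × (Fin n → Y) × (Fin n → Y3)) → ℝ :=
  fun ω => (∏ i, src.q (ω.1 i)) *
    ∏ k, ch.P (c.f1 (fun i => (ω.1 i).1) k) (c.f2 (fun i => (ω.1 i).2.1) k)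
      (relayIn c ω.2.2 (fun i => (ω.1 i).2.2.2) k) (ω.2.1 k) (ω.2.2 k)

/-- Error probability of a MABRC source-channel code: an error occurs if either
the destination or the relay fails to reconstruct both source sequences. -/
def mabrcErr (src : SourcePMF (S1 × S2 × W × W3)) (ch : DMMARC X1 X2 X3 Y Y3)
    (c : MABRCCode S1 S2 W W3 X1 X2 X3 Y Y3 m n) : ℝ :=
  ∑ ω : (Fin m → S1 × S2 × W × W3) × (Fin n → Y) × (Fin n → Y3),
    if c.g ω.2.1 (fun i => (ω.1 i).2.2.1) ≠ (fun i => (ω.1 i).1, fun i => (ω.1 i).2.1)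
        ∨ c.g3 ω.2.2 (fun i => (ω.1 i).2.2.2) ≠ (fun i => (ω.1 i).1, fun i => (ω.1 i).2.1)
    then mabrcLaw src ch c ω else 0

/-- Achievability of the source-channel rate `κ` for the DM MABRC. -/
def mabrcAchievable (src : SourcePMF (S1 × S2 × W × W3)) (ch : DMMARC X1 X2 X3 Y Y3)
    (κ : ℝ) : Prop :=
  ∀ ε : ℝ, 0 < ε → ∃ m0 n0 : ℕ, ∀ m n : ℕ, m0 < m → n0 < n → (n : ℝ) / m = κ →
    ∃ c : MABRCCode S1 S2 W W3 X1 X2 X3 Y Y3 m n, mabrcErr src ch c < ε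

end

section InformationInequalities

variable {Ω A B C : Type*} [Fintype Ω] {μ : Ω → ℝ}

lemma pr_nonneg (hμ : ∀ ω, 0 ≤ μ ω) (X : Ω → A) (a : A) : 0 ≤ pr μ X a :=
  Finset.sum_nonneg fun ω _ => by split_ifs <;> simp [hμ ω]

lemma pr_eq_pr_of_iff {X : Ω → A} {X' : Ω → B} {a : A} {b : B} (h : ∀ ω, X ω = a ↔ X' ω = b) :
    pr μ X a = pr μ X' b :=
  Finset.sum_congr rfl fun ω _ => if_congr (h ω) rfl rfl

lemma pr_comp [Fintype A] (X : Ω → A) (g : A → B) (b : B) :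
    pr μ (fun ω => g (X ω)) b = ∑ a with g a = b, pr μ X a := by
  simp only [pr]
  rw [Finset.sum_comm]
  refine Finset.sum_congr rfl fun ω _ => ?_
  rw [Finset.sum_ite_eq]
  simp

lemma pr_pair_comp [Fintype B] (X : Ω → A) (V : Ω → B) (g : B → C) (a : A) (c : C) :
    pr μ (fun ω => (X ω, g (V ω))) (a, c) =
      ∑ b with g b = c, pr μ (fun ω => (X ω, V ω)) (a, b) := by
  simp only [pr]
  rw [Finset.sum_comm]
  refine Finset.sum_congr rfl fun ω _ => ?_
  by_cases ha : X ω = a <;> simp [ha]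

lemma sum_pr_pair [Fintype A] (X : Ω → A) (V : Ω → B) (b : B) :
    ∑ a, pr μ (fun ω => (X ω, V ω)) (a, b) = pr μ V b := by
  simp only [pr]
  rw [Finset.sum_comm]
  refine Finset.sum_congr rfl fun ω _ => ?_
  by_cases hb : V ω = b <;> simp [hb]

lemma pr_pair_le [Fintype A] (hμ : ∀ ω, 0 ≤ μ ω) (X : Ω → A) (V : Ω → B) (a : A) (b : B) :
    pr μ (fun ω => (X ω, V ω)) (a, b) ≤ pr μ V b :=
  sum_pr_pair X V b ▸ Finset.single_le_sum (fun a _ => pr_nonneg hμ _ (a, b)) (Finset.mem_univ a)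

lemma Hent_comp_of_injective [Fintype A] [Fintype B] {g : A → B} (hg : g.Injective) (X : Ω → A) :
    Hent μ (fun ω => g (X ω)) = Hent μ X := by
  have hpr : ∀ a, pr μ (fun ω => g (X ω)) (g a) = pr μ X a := fun a =>
    pr_eq_pr_of_iff fun ω => hg.eq_iff
  have hzero : ∀ b ∉ Set.range g, pr μ (fun ω => g (X ω)) b = 0 := fun b hb =>
    Finset.sum_eq_zero fun ω _ => if_neg fun h => hb ⟨X ω, h⟩
  unfold Hent
  congr 1
  exact (Fintype.sum_of_injective g hg _ _ (fun b hb => by simp [hzero b hb])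
    (fun a => by rw [hpr])).symm

lemma condEnt_eq_sum [Fintype A] [Fintype B] (X : Ω → A) (V : Ω → B) :
    condEnt μ X V = ∑ a, ∑ b, (pr μ (fun ω => (X ω, V ω)) (a, b) * Real.logb 2 (pr μ V b)
      - pr μ (fun ω => (X ω, V ω)) (a, b) * Real.logb 2 (pr μ (fun ω => (X ω, V ω)) (a, b))) := by
  have hV : ∑ b, pr μ V b * Real.logb 2 (pr μ V b)
      = ∑ a, ∑ b, pr μ (fun ω => (X ω, V ω)) (a, b) * Real.logb 2 (pr μ V b) := by
    rw [Finset.sum_comm]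
    simp only [← Finset.sum_mul, sum_pr_pair]
  simp only [condEnt, Hent, Fintype.sum_prod_type, hV, Finset.sum_sub_distrib]
  ring

lemma mul_log_sub_mul_log_le {a b A B : ℝ} (ha : 0 ≤ a) (hab : a ≤ b) (haA : a ≤ A)
    (hbB : b ≤ B) :
    a * Real.log b - a * Real.log a ≤ a * Real.log B - a * Real.log A + (b * (A / B) - a) := by
  rcases ha.eq_or_lt with rfl | hpos
  · simp only [zero_mul, sub_zero, sub_self, zero_add]
    exact mul_nonneg hab (div_nonneg haA (hab.trans hbB))
  have hb : 0 < b := hpos.trans_le hab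
  have hA : 0 < A := hpos.trans_le haA
  have hB : 0 < B := hb.trans_le hbB
  -- `log y ≤ y - 1` at `y = b A / (a B)`
  have key := mul_le_mul_of_nonneg_left
    (Real.log_le_sub_one_of_pos (by positivity : 0 < b * A / (a * B))) hpos.le
  rw [Real.log_div (by positivity) (by positivity), Real.log_mul hb.ne' hA.ne',
    Real.log_mul hpos.ne' hB.ne'] at key
  have : a * (b * A / (a * B) - 1) = b * (A / B) - a := by
    field_simp
  linarith

/-- The log-sum inequality. -/
lemma sum_mul_log_sub_le {ι : Type*} (s : Finset ι) {a b : ι → ℝ} (ha : ∀ i ∈ s, 0 ≤ a i)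
    (hab : ∀ i ∈ s, a i ≤ b i) :
    ∑ i ∈ s, (a i * Real.log (b i) - a i * Real.log (a i))
      ≤ (∑ i ∈ s, a i) * Real.log (∑ i ∈ s, b i) - (∑ i ∈ s, a i) * Real.log (∑ i ∈ s, a i) := by
  set A := ∑ i ∈ s, a i
  set B := ∑ i ∈ s, b i
  have hAB : A ≤ B := Finset.sum_le_sum hab
  have hA : 0 ≤ A := Finset.sum_nonneg ha
  have hrest : ∑ i ∈ s, (b i * (A / B) - a i) ≤ 0 := by
    rw [Finset.sum_sub_distrib, ← Finset.sum_mul]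
    rcases (hA.trans hAB).eq_or_lt with hB | hB
    · rw [← hB, div_zero, mul_zero]
      linarith
    · rw [mul_div_cancel₀ A hB.ne', sub_self]
  calc _ ≤ ∑ i ∈ s, (a i * Real.log B - a i * Real.log A + (b i * (A / B) - a i)) :=
        Finset.sum_le_sum fun i hi => mul_log_sub_mul_log_le (ha i hi) (hab i hi)
          (Finset.single_le_sum ha hi)
          (Finset.single_le_sum (fun j hj => (ha j hj).trans (hab j hj)) hi)
    _ ≤ _ := by
      rw [Finset.sum_add_distrib, Finset.sum_sub_distrib, ← Finset.sum_mul, ← Finset.sum_mul]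
      linarith

lemma condEnt_le_comp [Fintype A] [Fintype B] [Fintype C] (hμ : ∀ ω, 0 ≤ μ ω)
    (X : Ω → A) (V : Ω → B) (g : B → C) :
    condEnt μ X V ≤ condEnt μ X (fun ω => g (V ω)) := by
  rw [condEnt_eq_sum, condEnt_eq_sum]
  refine Finset.sum_le_sum fun a _ => ?_
  rw [← Finset.sum_fiberwise Finset.univ g]
  refine Finset.sum_le_sum fun c _ => ?_
  rw [pr_pair_comp, pr_comp]
  simp only [Real.logb, ← mul_div_assoc, ← sub_div, ← Finset.sum_div]
  exact div_le_div_of_nonneg_right (sum_mul_log_sub_le _ (fun b _ => pr_nonneg hμ _ _)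
    fun b _ => pr_pair_le hμ X V a b) (Real.log_nonneg one_le_two)

lemma condEnt_of_isEmpty [IsEmpty Ω] [Fintype A] [Fintype B] (X : Ω → A) (V : Ω → B) :
    condEnt μ X V = 0 := by
  simp [condEnt, Hent, pr]

lemma condEnt_le_of_factorsThrough [Fintype A] [Fintype B] [Fintype C] (hμ : ∀ ω, 0 ≤ μ ω)
    (X : Ω → A) {V : Ω → B} {W : Ω → C} (h : W.FactorsThrough V) :
    condEnt μ X V ≤ condEnt μ X W := by
  cases isEmpty_or_nonempty Ω
  · simp [condEnt_of_isEmpty]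
  have : Nonempty C := ⟨W (Classical.arbitrary Ω)⟩
  obtain ⟨g, rfl⟩ := (Function.factorsThrough_iff W).1 h
  exact condEnt_le_comp hμ X V g

lemma condEnt_congr_of_factorsThrough [Fintype A] [Fintype B] [Fintype C] (hμ : ∀ ω, 0 ≤ μ ω)
    (X : Ω → A) {V : Ω → B} {W : Ω → C} (hWV : W.FactorsThrough V) (hVW : V.FactorsThrough W) :
    condEnt μ X V = condEnt μ X W :=
  (condEnt_le_of_factorsThrough hμ X hWV).antisymm (condEnt_le_of_factorsThrough hμ X hVW)

lemma condMutInfo_comm [Fintype A] [Fintype B] [Fintype C] (X : Ω → A) (Y : Ω → B) (Z : Ω → C) :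
    condMutInfo μ X Y Z = condMutInfo μ Y X Z := by
  have hswap : Hent μ (fun ω => (X ω, Y ω, Z ω)) = Hent μ (fun ω => (Y ω, X ω, Z ω)) :=
    Hent_comp_of_injective (g := fun p : B × A × C => (p.2.1, p.1, p.2.2))
      (fun p q h => by simp_all [Prod.ext_iff]) (fun ω => (Y ω, X ω, Z ω))
  simp only [condMutInfo, condEnt, hswap]
  ring

lemma condMutInfo_comp_le {D : Type*} [Fintype A] [Fintype B] [Fintype C] [Fintype D]
    (hμ : ∀ ω, 0 ≤ μ ω) (X : Ω → A) (Y : Ω → B) (Z : Ω → C) (f : A → D) :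
    condMutInfo μ (fun ω => f (X ω)) Y Z ≤ condMutInfo μ X Y Z := by
  rw [condMutInfo_comm, condMutInfo_comm X]
  simp only [condMutInfo]
  linarith [condEnt_le_comp hμ Y (fun ω => (X ω, Z ω)) (fun p => (f p.1, p.2))]

lemma condEnt_eq_of_pr_pair_eq_mul [Fintype A] [Fintype B] {Y : Ω → B} {V : Ω → A}
    {k : A → B → ℝ} (h : ∀ a b, pr μ (fun ω => (Y ω, V ω)) (b, a) = k a b * pr μ V a) :
    condEnt μ Y V = ∑ a, pr μ V a * ∑ b, -(k a b * Real.logb 2 (k a b)) := by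
  have hterm : ∀ a b, pr μ (fun ω => (Y ω, V ω)) (b, a) * Real.logb 2 (pr μ V a)
      - pr μ (fun ω => (Y ω, V ω)) (b, a) * Real.logb 2 (pr μ (fun ω => (Y ω, V ω)) (b, a))
      = pr μ V a * -(k a b * Real.logb 2 (k a b)) := by
    intro a b
    rw [h]
    rcases eq_or_ne (k a b) 0 with hk | hk
    · simp [hk]
    rcases eq_or_ne (pr μ V a) 0 with hp | hp
    · simp [hp]
    rw [Real.logb_mul hk hp]
    ring
  rw [condEnt_eq_sum, Finset.sum_comm]
  simp only [hterm, Finset.mul_sum]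

/-- The Markov chain `V - X - Y`. -/
lemma condEnt_eq_of_kernel [Fintype A] [Fintype B] [Fintype C] {Y : Ω → B} {V : Ω → A}
    {X : Ω → C} (q : C → B → ℝ) (hX : X.FactorsThrough V)
    (h : ∀ ω b, pr μ (fun ω' => (Y ω', V ω')) (b, V ω) = q (X ω) b * pr μ V (V ω)) :
    condEnt μ Y V = condEnt μ Y X := by
  cases isEmpty_or_nonempty Ω
  · simp [condEnt_of_isEmpty]
  have : Nonempty C := ⟨X (Classical.arbitrary Ω)⟩
  obtain ⟨g, rfl⟩ := (Function.factorsThrough_iff X).1 hX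
  change condEnt μ Y V = condEnt μ Y (fun ω => g (V ω))
  have hV : ∀ a b, pr μ (fun ω => (Y ω, V ω)) (b, a) = q (g a) b * pr μ V a := by
    intro a b
    by_cases ha : ∃ ω, V ω = a
    · obtain ⟨ω, rfl⟩ := ha
      exact h ω b
    push Not at ha
    have hYV : pr μ (fun ω => (Y ω, V ω)) (b, a) = 0 :=
      Finset.sum_eq_zero fun ω _ => if_neg fun he => ha ω (congrArg Prod.snd he)
    have hVa : pr μ V a = 0 := Finset.sum_eq_zero fun ω _ => if_neg (ha ω)
    rw [hYV, hVa, mul_zero]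
  have hgV : ∀ c b, pr μ (fun ω => (Y ω, g (V ω))) (b, c) = q c b * pr μ (fun ω => g (V ω)) c := by
    intro c b
    rw [pr_pair_comp, pr_comp, Finset.mul_sum]
    exact Finset.sum_congr rfl fun a ha => by rw [hV, (Finset.mem_filter.1 ha).2]
  rw [condEnt_eq_of_pr_pair_eq_mul hV, condEnt_eq_of_pr_pair_eq_mul hgV]
  simp only [pr_comp, Finset.sum_mul]
  rw [← Finset.sum_fiberwise Finset.univ g]
  exact Finset.sum_congr rfl fun c _ => Finset.sum_congr rfl fun a ha => by
    rw [(Finset.mem_filter.1 ha).2]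

end InformationInequalities

section Past

variable {β : Type*}

/-- The entries before time `t`; the `Option` encoding keeps the type independent of `t`. -/
def past (t : ℕ) (y : Fin n → β) : Fin n → Option β :=
  fun j => if j.val < t then some (y j) else none

lemma past_eq_past_iff {t : ℕ} {y z : Fin n → β} :
    past t y = past t z ↔ ∀ j : Fin n, j.val < t → y j = z j := by
  simp only [past, funext_iff]
  refine forall_congr' fun j => ?_
  by_cases hj : j.val < t <;> simp [hj]

lemma past_succ_eq_past_succ_iff {y z : Fin n → β} {t : Fin n} :
    past (t + 1) y = past (t + 1) z ↔ y t = z t ∧ past t y = past t z := by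
  simp only [past_eq_past_iff, Nat.lt_succ_iff_lt_or_eq]
  constructor
  · intro h
    exact ⟨h t (Or.inr rfl), fun j hj => h j (Or.inl hj)⟩
  · rintro ⟨ht, h⟩ j (hj | hj)
    · exact h j hj
    · rwa [Fin.ext hj]

lemma past_update_self (z : Fin n → β) (t : Fin n) (b : β) :
    past t (Function.update z t b) = past t z :=
  past_eq_past_iff.2 fun _ hj => Function.update_of_ne (fun h => hj.ne (congrArg Fin.val h)) b z

lemma prod_lt_succ_update (R : Fin n → (Fin n → β) → ℝ) (hR : ∀ k, DependsOn (R k) (Set.Iic k))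
    (z : Fin n → β) (t : Fin n) (b : β) :
    ∏ k : Fin n with k.val < t.val + 1, R k (Function.update z t b)
      = (∏ k : Fin n with k.val < t.val, R k z) * R t (Function.update z t b) := by
  have hfilter : (univ.filter fun k : Fin n => k.val < t.val + 1)
      = insert t (univ.filter fun k : Fin n => k.val < t.val) := by
    ext k
    simp [le_iff_eq_or_lt, Fin.val_inj]
  rw [hfilter, Finset.prod_insert (by simp), mul_comm]
  congr 1
  refine Finset.prod_congr rfl fun k hk => hR k fun i hi => ?_
  have hik : i.val < t.val := lt_of_le_of_lt hi (Finset.mem_filter.1 hk).2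
  exact Function.update_of_ne (fun h => hik.ne (congrArg Fin.val h)) b z

lemma sum_prod_of_causal [Fintype β] (R : Fin n → (Fin n → β) → ℝ)
    (hR : ∀ k, DependsOn (R k) (Set.Iic k)) (hR1 : ∀ k y, ∑ b, R k (Function.update y k b) = 1)
    {t : ℕ} (ht : t ≤ n) (z : Fin n → β) :
    ∑ y with past t y = past t z, ∏ k, R k y = ∏ k : Fin n with k.val < t, R k z := by
  induction ht using Nat.decreasingInduction generalizing z with
  | self =>
    have hz : (univ.filter fun y : Fin n → β => past n y = past n z) = {z} := by
      ext y
      simp only [Finset.mem_filter, Finset.mem_univ, true_and, Finset.mem_singleton,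
        past_eq_past_iff]
      exact ⟨fun h => funext fun j => h j j.isLt, fun h j _ => h ▸ rfl⟩
    rw [hz, Finset.sum_singleton]
    simp
  | of_succ t ht ih =>
    set tt : Fin n := ⟨t, ht⟩
    have hsplit : ∀ b, (univ.filter fun y : Fin n → β => past t y = past t z ∧ y tt = b)
        = univ.filter fun y => past (t + 1) y = past (t + 1) (Function.update z tt b) := by
      intro b
      ext y
      simp only [Finset.mem_filter, Finset.mem_univ, true_and]
      rw [past_succ_eq_past_succ_iff (t := tt), Function.update_self, past_update_self, and_comm]
    rw [← Finset.sum_fiberwise _ (fun y => y tt)]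
    simp only [Finset.filter_filter, hsplit, ih]
    calc ∑ b, ∏ k : Fin n with k.val < t + 1, R k (Function.update z tt b)
        = ∑ b, (∏ k : Fin n with k.val < t, R k z) * R tt (Function.update z tt b) :=
          Finset.sum_congr rfl fun b _ => prod_lt_succ_update R hR z tt b
      _ = ∏ k : Fin n with k.val < t, R k z := by rw [← Finset.mul_sum, hR1, mul_one]

lemma condEnt_past_zero {Ω A B : Type*} [Fintype Ω] [Fintype A] [Fintype B] [Fintype β]
    {μ : Ω → ℝ} (hμ : ∀ ω, 0 ≤ μ ω) (X : Ω → A) (Yv : Ω → Fin n → β) (V : Ω → B) :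
    condEnt μ X (fun ω => (past 0 (Yv ω), V ω)) = condEnt μ X V :=
  condEnt_congr_of_factorsThrough hμ X (fun _ _ h => congrArg Prod.snd h) fun ω ω' h =>
    Prod.ext (past_eq_past_iff (y := Yv ω) (z := Yv ω').2 fun _ hj => absurd hj (Nat.not_lt_zero _))
      h

lemma condEnt_past_length {Ω A B : Type*} [Fintype Ω] [Fintype A] [Fintype B] [Fintype β]
    {μ : Ω → ℝ} (hμ : ∀ ω, 0 ≤ μ ω) (X : Ω → A) (Yv : Ω → Fin n → β) (V : Ω → B) :
    condEnt μ X (fun ω => (past n (Yv ω), V ω)) = condEnt μ X (fun ω => (Yv ω, V ω)) :=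
  condEnt_congr_of_factorsThrough hμ X
    (fun _ _ h => by
      simp only [Prod.mk.injEq, past_eq_past_iff] at h ⊢
      exact ⟨funext fun j => h.1 j j.isLt, h.2⟩)
    fun _ _ h => by
      simp only [Prod.mk.injEq] at h ⊢
      exact ⟨congrArg (past n) h.1, h.2⟩

lemma condEnt_past_succ {Ω A B : Type*} [Fintype Ω] [Fintype A] [Fintype B] [Fintype β]
    {μ : Ω → ℝ} (hμ : ∀ ω, 0 ≤ μ ω) (X : Ω → A) (Yv : Ω → Fin n → β) (V : Ω → B) (t : Fin n) :
    condEnt μ X (fun ω => (past (t + 1) (Yv ω), V ω))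
      = condEnt μ X (fun ω => (Yv ω t, past t (Yv ω), V ω)) := by
  refine condEnt_congr_of_factorsThrough hμ X (fun _ _ h => ?_) (fun _ _ h => ?_) <;>
  simp only [Prod.mk.injEq, past_succ_eq_past_succ_iff] at h ⊢ <;> tauto

end Past

section RelayLaw

lemma relayIn_congr (c : MABRCCode S1 S2 W W3 X1 X2 X3 Y Y3 m n) {y3 y3' : Fin n → Y3}
    (w3 : Fin m → W3) {k : Fin n} (h : past k y3 = past k y3') :
    relayIn c y3 w3 k = relayIn c y3' w3 k := by
  simp only [relayIn]
  congr 1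
  funext j
  exact past_eq_past_iff.1 h _ j.isLt

def channelIn (c : MABRCCode S1 S2 W W3 X1 X2 X3 Y Y3 m n) (s : Fin m → S1 × S2 × W × W3)
    (y3 : Fin n → Y3) (k : Fin n) : X1 × X2 × X3 :=
  (c.f1 (fun i => (s i).1) k, c.f2 (fun i => (s i).2.1) k, relayIn c y3 (fun i => (s i).2.2.2) k)

lemma channelIn_update_self (c : MABRCCode S1 S2 W W3 X1 X2 X3 Y Y3 m n)
    (s : Fin m → S1 × S2 × W × W3) (y3 : Fin n → Y3) (k : Fin n) (b : Y3) :
    channelIn c s (Function.update y3 k b) k = channelIn c s y3 k := by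
  simp only [channelIn, relayIn_congr c _ (past_update_self y3 k b)]

variable [Fintype X1] [Fintype X2] [Fintype X3] [Fintype Y] [Fintype Y3]

def relayKernel (ch : DMMARC X1 X2 X3 Y Y3) (x : X1 × X2 × X3) (b : Y3) : ℝ :=
  ∑ y, ch.P x.1 x.2.1 x.2.2 y b

lemma relayKernel_channelIn_dependsOn (ch : DMMARC X1 X2 X3 Y Y3)
    (c : MABRCCode S1 S2 W W3 X1 X2 X3 Y Y3 m n) (s : Fin m → S1 × S2 × W × W3) (k : Fin n) :
    DependsOn (fun y3 => relayKernel ch (channelIn c s y3 k) (y3 k)) (Set.Iic k) :=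
  fun y y' h => by
    simp only [channelIn, relayIn_congr c _ (past_eq_past_iff.2 fun j hj => h j (le_of_lt hj)),
      h k (Set.mem_Iic.2 le_rfl)]

lemma sum_relayKernel_channelIn_update (ch : DMMARC X1 X2 X3 Y Y3)
    (c : MABRCCode S1 S2 W W3 X1 X2 X3 Y Y3 m n) (s : Fin m → S1 × S2 × W × W3) (k : Fin n)
    (y3 : Fin n → Y3) :
    ∑ b, relayKernel ch (channelIn c s (Function.update y3 k b) k) (Function.update y3 k b k)
      = 1 := by
  simp only [channelIn_update_self, Function.update_self, relayKernel]
  rw [Finset.sum_comm]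
  exact ch.sum_one _ _ _

variable [Fintype S1] [Fintype S2] [Fintype W] [Fintype W3]
  (src : SourcePMF (S1 × S2 × W × W3)) (ch : DMMARC X1 X2 X3 Y Y3)
  (c : MABRCCode S1 S2 W W3 X1 X2 X3 Y Y3 m n)

lemma mabrcLaw_nonneg (ω) : 0 ≤ mabrcLaw src ch c ω :=
  mul_nonneg (Finset.prod_nonneg fun _ _ => src.nonneg _)
    (Finset.prod_nonneg fun _ _ => ch.nonneg _ _ _ _ _)

lemma sum_mabrcLaw (s : Fin m → S1 × S2 × W × W3) (y3 : Fin n → Y3) :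
    ∑ y, mabrcLaw src ch c (s, y, y3)
      = (∏ i, src.q (s i)) * ∏ k, relayKernel ch (channelIn c s y3 k) (y3 k) := by
  simp only [mabrcLaw, relayKernel, ← Finset.mul_sum, Fintype.prod_sum]
  rfl

lemma pr_source_past {t : ℕ} (ht : t ≤ n) (s : Fin m → S1 × S2 × W × W3) (z : Fin n → Y3) :
    pr (mabrcLaw src ch c) (fun ω => (ω.1, past t ω.2.2)) (s, past t z)
      = (∏ i, src.q (s i))
        * ∏ k : Fin n with k.val < t, relayKernel ch (channelIn c s z k) (z k) := by
  rw [← sum_prod_of_causal _ (relayKernel_channelIn_dependsOn ch c s)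
    (sum_relayKernel_channelIn_update ch c s) ht z, Finset.mul_sum]
  simp only [pr, Fintype.sum_prod_type, Prod.mk.injEq]
  rw [Finset.sum_eq_single s (fun s' _ hs' => by simp [hs']) (by simp)]
  rw [Finset.sum_comm, Finset.sum_filter]
  refine Finset.sum_congr rfl fun y3 _ => ?_
  by_cases h : past t y3 = past t z <;> simp [h, sum_mabrcLaw]

lemma pr_output_source_past (t : Fin n) (s : Fin m → S1 × S2 × W × W3) (z : Fin n → Y3) (b : Y3) :
    pr (mabrcLaw src ch c) (fun ω => (ω.2.2 t, (ω.1, past t ω.2.2))) (b, (s, past t z))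
      = relayKernel ch (channelIn c s z t) b
        * pr (mabrcLaw src ch c) (fun ω => (ω.1, past t ω.2.2)) (s, past t z) := by
  have hevent : ∀ ω : (Fin m → S1 × S2 × W × W3) × (Fin n → Y) × (Fin n → Y3),
      (ω.2.2 t, (ω.1, past t ω.2.2)) = (b, (s, past t z))
        ↔ (ω.1, past (t + 1) ω.2.2) = (s, past (t + 1) (Function.update z t b)) := by
    intro ω
    simp only [Prod.mk.injEq, past_succ_eq_past_succ_iff, Function.update_self, past_update_self]
    tauto
  rw [pr_eq_pr_of_iff hevent, pr_source_past _ _ _ t.isLt, pr_source_past _ _ _ t.isLt.le,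
    prod_lt_succ_update _ (relayKernel_channelIn_dependsOn ch c s), channelIn_update_self,
    Function.update_self]
  ring

lemma condEnt_relayOutput_eq (t : Fin n) :
    condEnt (mabrcLaw src ch c) (fun ω => ω.2.2 t)
        (fun ω => ((fun j => (ω.1 j).1, fun j => (ω.1 j).2.2.1),
          past t ω.2.2, fun j => (ω.1 j).2.1, fun j => (ω.1 j).2.2.2))
      = condEnt (mabrcLaw src ch c) (fun ω => ω.2.2 t) (fun ω => channelIn c ω.1 ω.2.2 t) := by
  have hμ := mabrcLaw_nonneg src ch c
  rw [← condEnt_eq_of_kernel (relayKernel ch) (fun ω ω' h => ?channel)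
    fun ω b => pr_output_source_past src ch c t ω.1 ω.2.2 b]
  case channel =>
    simp only [Prod.mk.injEq] at h
    rw [channelIn, channelIn, h.1, relayIn_congr c _ h.2]
  refine condEnt_congr_of_factorsThrough hμ _ (fun ω ω' h => ?_) (fun ω ω' h => ?_)
  · simp only [Prod.mk.injEq, funext_iff] at h
    exact Prod.ext (funext fun j => Prod.ext (h.1.1 j) (Prod.ext (h.2.2.1 j)
      (Prod.ext (h.1.2 j) (h.2.2.2 j)))) (funext h.2.1)
  · simp only [Prod.mk.injEq] at h
    simp [h]

lemma condEnt_past_sub_le (t : Fin n) :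
    condEnt (mabrcLaw src ch c) (fun ω => (fun j => (ω.1 j).1, fun j => (ω.1 j).2.2.1))
        (fun ω => (past t ω.2.2, fun j => (ω.1 j).2.1, fun j => (ω.1 j).2.2.2))
      - condEnt (mabrcLaw src ch c) (fun ω => (fun j => (ω.1 j).1, fun j => (ω.1 j).2.2.1))
        (fun ω => (past (t + 1) ω.2.2, fun j => (ω.1 j).2.1, fun j => (ω.1 j).2.2.2))
    ≤ condMutInfo (mabrcLaw src ch c) (fun ω => c.f1 (fun j => (ω.1 j).1) t) (fun ω => ω.2.2 t)
        (fun ω => (c.f2 (fun j => (ω.1 j).2.1) t, relayIn c ω.2.2 (fun j => (ω.1 j).2.2.2) t)) := by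
  have hμ := mabrcLaw_nonneg src ch c
  have hcoarsen : condEnt (mabrcLaw src ch c) (fun ω => ω.2.2 t)
        (fun ω => (past t ω.2.2, fun j => (ω.1 j).2.1, fun j => (ω.1 j).2.2.2))
      ≤ condEnt (mabrcLaw src ch c) (fun ω => ω.2.2 t)
        (fun ω => (c.f2 (fun j => (ω.1 j).2.1) t, relayIn c ω.2.2 (fun j => (ω.1 j).2.2.2) t)) := by
    refine condEnt_le_of_factorsThrough hμ _ (fun ω ω' h => ?_)
    simp only [Prod.mk.injEq] at h
    obtain ⟨hpast, hS2, hW3⟩ := h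
    rw [hS2, hW3, relayIn_congr c _ hpast]
  simp only [condEnt_past_succ hμ]
  change condMutInfo (mabrcLaw src ch c) _ (fun ω => ω.2.2 t) _ ≤ _
  rw [condMutInfo_comm, condMutInfo_comm (μ := mabrcLaw src ch c)
    (fun ω => c.f1 (fun j => (ω.1 j).1) t)]
  simp only [condMutInfo]
  rw [condEnt_relayOutput_eq]
  simp only [channelIn]
  linarith

end RelayLaw

section ChainIneq

variable {S1 S2 W W3 X1 X2 X3 Y Y3 : Type}
  [Fintype S1] [Fintype S2] [Fintype W] [Fintype W3]
  [Fintype X1] [Fintype X2] [Fintype X3] [Fintype Y] [Fintype Y3]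

/-- Converse chain inequality at the relay
(key step in the proof of Proposition 2):
`∑_{i=1}^{n} I(X_{1,i};Y_{3,i}|X_{2,i},X_{3,i}) ≥ I(S1^m,W^m;Y3^n|S2^m,W3^m)
  ≥ H(S1^m|S2^m,W3^m) − H(S1^m|Y3^n,S2^m,W3^m)`. -/
theorem mabrc_converse_chain_relay {m n : ℕ}
    (src : SourcePMF (S1 × S2 × W × W3)) (ch : DMMARC X1 X2 X3 Y Y3)
    (c : MABRCCode S1 S2 W W3 X1 X2 X3 Y Y3 m n) :
    (∑ i : Fin n, condMutInfo (mabrcLaw src ch c)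
        (fun ω => c.f1 (fun j => (ω.1 j).1) i)
        (fun ω => ω.2.2 i)
        (fun ω => (c.f2 (fun j => (ω.1 j).2.1) i,
          relayIn c ω.2.2 (fun j => (ω.1 j).2.2.2) i))
      ≥ condMutInfo (mabrcLaw src ch c)
        (fun ω => (fun j => (ω.1 j).1, fun j => (ω.1 j).2.2.1))
        (fun ω => ω.2.2)
        (fun ω => (fun j => (ω.1 j).2.1, fun j => (ω.1 j).2.2.2)))
    ∧ (condMutInfo (mabrcLaw src ch c)
        (fun ω => (fun j => (ω.1 j).1, fun j => (ω.1 j).2.2.1))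
        (fun ω => ω.2.2)
        (fun ω => (fun j => (ω.1 j).2.1, fun j => (ω.1 j).2.2.2))
      ≥ condEnt (mabrcLaw src ch c) (fun ω => fun j => (ω.1 j).1)
          (fun ω => (fun j => (ω.1 j).2.1, fun j => (ω.1 j).2.2.2))
        - condEnt (mabrcLaw src ch c) (fun ω => fun j => (ω.1 j).1)
          (fun ω => (ω.2.2, fun j => (ω.1 j).2.1, fun j => (ω.1 j).2.2.2))) := by
  have hμ := mabrcLaw_nonneg src ch c
  refine ⟨?_, condMutInfo_comp_le hμ (fun ω => (fun j => (ω.1 j).1, fun j => (ω.1 j).2.2.1))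
    (fun ω => ω.2.2) (fun ω => (fun j => (ω.1 j).2.1, fun j => (ω.1 j).2.2.2)) Prod.fst⟩
  set D : ℕ → ℝ := fun t => condEnt (mabrcLaw src ch c)
    (fun ω => (fun j => (ω.1 j).1, fun j => (ω.1 j).2.2.1))
    (fun ω => (past t ω.2.2, fun j => (ω.1 j).2.1, fun j => (ω.1 j).2.2.2))
  calc condMutInfo (mabrcLaw src ch c)
        (fun ω => (fun j => (ω.1 j).1, fun j => (ω.1 j).2.2.1))
        (fun ω => ω.2.2)
        (fun ω => (fun j => (ω.1 j).2.1, fun j => (ω.1 j).2.2.2))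
      = D 0 - D n := by
        simp only [D, condEnt_past_zero hμ, condEnt_past_length hμ]
        rfl
    _ = ∑ i : Fin n, (D i - D (i + 1)) := by
        rw [Fin.sum_univ_eq_sum_range (fun i => D i - D (i + 1)), Finset.sum_range_sub']
    _ ≤ _ := Finset.sum_le_sum fun i _ => condEnt_past_sub_le src ch c i

end ChainIneq

end Paper
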